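/- arXiv:1609.01606 — 7 statements merged into one kernel-verified Lean document; each statement's English description precedes it below -/
import Mathlib

section
/- Let D ⊆ ℂ be a simply connected open set and Φ = (φ₁, φ₂, φ₃, φ₄) : D → ℂ⁴ be holomorphic with φ₁² + φ₂² + φ₃² + φ₄² = 0 on D and φ₁² + φ₂² nonvanishing on D. Then there exist holomorphic functions f, h₁, h₂ : D → ℂ with f nonvanishing such that φ₁ = f·cos h₁, φ₂ = f·sin h₁, φ₃ = i·f·cos h₂ and φ₄ = i·f·sin h₂ on D. -/
/-!
Write `φ₁ ± i φ₂ = e^{L₁}, e^{L₂}` and `φ₃ + i φ₄ = e^{L₃}` with holomorphic logarithms, which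
exist on a simply connected domain because these functions do not vanish. Then
`f = e^{(L₁+L₂)/2}` and `h₁ = (L₁ - L₂)/2i`. Since
`(φ₃ + i φ₄)(φ₃ - i φ₄) = -(φ₁² + φ₂²) = e^{L₁+L₂+πi}`, the function `φ₃ - i φ₄` has the logarithm
`L₁ + L₂ + πi - L₃`, and the same recipe applied to the pair `(φ₃, φ₄)` produces `i f` and `h₂`.
-/

open Complex Filter Topology

namespace Complex

variable {E : Type*} [NormedAddCommGroup E] [NormedSpace ℂ E]

theorem differentiableAt_of_continuousAt_of_exp_eq {L g : E → ℂ} {z : E} (hL : ContinuousAt L z)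
    (hg : DifferentiableAt ℂ g z) (hexp : ∀ᶠ w in 𝓝 z, exp (L w) = g w) :
    DifferentiableAt ℂ L z := by
  have hgz : g z ≠ 0 := hexp.self_of_nhds ▸ exp_ne_zero _
  -- near `z`, `L - L z` stays in the strip `|Im| < π` where `log ∘ exp = id`
  have hloc : L =ᶠ[𝓝 z] fun w => L z + log (g w * (g z)⁻¹) := by
    filter_upwards [hexp, hL.eventually (Metric.ball_mem_nhds (L z) Real.pi_pos)] with w hw hball
    have him : |(L w - L z).im| < Real.pi :=
      (abs_im_le_norm _).trans_lt (dist_eq_norm (L w) (L z) ▸ hball)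
    rw [← hw, ← hexp.self_of_nhds, ← div_eq_mul_inv, ← exp_sub,
      log_exp (abs_lt.mp him).1 (abs_lt.mp him).2.le]
    ring
  have hlog : DifferentiableAt ℂ (fun w => L z + log (g w * (g z)⁻¹)) z :=
    ((hg.mul_const (g z)⁻¹).clog (by rw [mul_inv_cancel₀ hgz]; exact one_mem_slitPlane)).const_add _
  exact hlog.congr_of_eventuallyEq hloc

theorem exists_differentiableOn_exp_eq {U : Set E} (hUc : IsSimplyConnected U)
    (hUo : IsOpen U) {g : E → ℂ} (hg : DifferentiableOn ℂ g U) (hg₀ : ∀ z ∈ U, g z ≠ 0) :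
    ∃ L : E → ℂ, DifferentiableOn ℂ L U ∧ ∀ z ∈ U, exp (L z) = g z := by
  obtain ⟨L, hLc, hL⟩ := exists_continuousOn_eqOn_exp_comp hUc hUo hg.continuousOn
    (fun ⟨z, hz, hgz⟩ => hg₀ z hz hgz)
  refine ⟨L, fun z hz => ?_, hL⟩
  have hU : U ∈ 𝓝 z := hUo.mem_nhds hz
  exact (differentiableAt_of_continuousAt_of_exp_eq (hLc.continuousAt hU)
    (hg.differentiableAt hU) (eventually_of_mem hU hL)).differentiableWithinAt

theorem add_I_mul_mul_sub_I_mul (x y : ℂ) : (x + I * y) * (x - I * y) = x ^ 2 + y ^ 2 := by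
  linear_combination (-y ^ 2) * I_sq

theorem add_I_mul_ne_zero_and_sub_I_mul_ne_zero {x y : ℂ} (h : x ^ 2 + y ^ 2 ≠ 0) :
    x + I * y ≠ 0 ∧ x - I * y ≠ 0 :=
  mul_ne_zero_iff.mp (add_I_mul_mul_sub_I_mul x y ▸ h)

theorem exp_sub_eq_sub_I_mul {c s x y : ℂ} (hc : exp c = x + I * y) (hs : exp s = x ^ 2 + y ^ 2) :
    exp (s - c) = x - I * y := by
  have hc₀ : x + I * y ≠ 0 := hc ▸ exp_ne_zero c
  rw [exp_sub, hc, hs, ← add_I_mul_mul_sub_I_mul, mul_div_cancel_left₀ _ hc₀]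

theorem eq_exp_mul_cos_and_eq_exp_mul_sin {a b x y : ℂ} (ha : exp a = x + I * y)
    (hb : exp b = x - I * y) :
    x = exp ((a + b) / 2) * cos ((a - b) / (2 * I)) ∧
      y = exp ((a + b) / 2) * sin ((a - b) / (2 * I)) := by
  have hw : (a - b) / (2 * I) * I = (a - b) / 2 := by field_simp
  have hadd : exp ((a + b) / 2) * exp ((a - b) / (2 * I) * I) = x + I * y := by
    rw [← exp_add, hw, ← ha]; ring_nf
  have hsub : exp ((a + b) / 2) * exp (-((a - b) / (2 * I)) * I) = x - I * y := by
    rw [← exp_add, neg_mul, hw, ← hb]; ring_nf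
  constructor
  · rw [cos]
    linear_combination (-hadd - hsub) / 2
  · rw [sin]
    linear_combination (I / 2) * hadd - (I / 2) * hsub + y * I_sq

end Complex

/-- STATEMENT 6 (trigonometric Weierstrass representation): if `D ⊆ ℂ` is a simply
connected open set and `Φ = (φ₁,φ₂,φ₃,φ₄) : D → ℂ⁴` is holomorphic with
`φ₁² + φ₂² + φ₃² + φ₄² = 0` and `φ₁² + φ₂²` nonvanishing on `D`, then there exist
holomorphic `f, h₁, h₂ : D → ℂ` with `f` nonvanishing such that
`φ₁ = f cos h₁`, `φ₂ = f sin h₁`, `φ₃ = i f cos h₂`, `φ₄ = i f sin h₂` on `D`. -/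
theorem stmt6 (D : Set ℂ) (hD : IsOpen D) (hsc : SimplyConnectedSpace D)
    (φ₁ φ₂ φ₃ φ₄ : ℂ → ℂ)
    (h1 : DifferentiableOn ℂ φ₁ D) (h2 : DifferentiableOn ℂ φ₂ D)
    (h3 : DifferentiableOn ℂ φ₃ D) (h4 : DifferentiableOn ℂ φ₄ D)
    (hsum : ∀ t ∈ D, φ₁ t ^ 2 + φ₂ t ^ 2 + φ₃ t ^ 2 + φ₄ t ^ 2 = 0)
    (h12 : ∀ t ∈ D, φ₁ t ^ 2 + φ₂ t ^ 2 ≠ 0) :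
    ∃ f h₁ h₂ : ℂ → ℂ,
      DifferentiableOn ℂ f D ∧ DifferentiableOn ℂ h₁ D ∧ DifferentiableOn ℂ h₂ D ∧
      (∀ t ∈ D, f t ≠ 0) ∧
      (∀ t ∈ D,
        φ₁ t = f t * Complex.cos (h₁ t) ∧
        φ₂ t = f t * Complex.sin (h₁ t) ∧
        φ₃ t = Complex.I * f t * Complex.cos (h₂ t) ∧
        φ₄ t = Complex.I * f t * Complex.sin (h₂ t)) := by
  have h34 : ∀ t ∈ D, φ₃ t ^ 2 + φ₄ t ^ 2 = -(φ₁ t ^ 2 + φ₂ t ^ 2) := fun t ht => by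
    linear_combination hsum t ht
  obtain ⟨L₁, hL₁d, hL₁⟩ := exists_differentiableOn_exp_eq hsc hD
    (g := fun t => φ₁ t + I * φ₂ t) (h1.add (h2.const_mul I))
    fun t ht => (add_I_mul_ne_zero_and_sub_I_mul_ne_zero (h12 t ht)).1
  obtain ⟨L₂, hL₂d, hL₂⟩ := exists_differentiableOn_exp_eq hsc hD
    (g := fun t => φ₁ t - I * φ₂ t) (h1.sub (h2.const_mul I))
    fun t ht => (add_I_mul_ne_zero_and_sub_I_mul_ne_zero (h12 t ht)).2
  obtain ⟨L₃, hL₃d, hL₃⟩ := exists_differentiableOn_exp_eq hsc hD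
    (g := fun t => φ₃ t + I * φ₄ t) (h3.add (h4.const_mul I))
    fun t ht => (add_I_mul_ne_zero_and_sub_I_mul_ne_zero (h34 t ht ▸ neg_ne_zero.mpr (h12 t ht))).1
  set L₄ : ℂ → ℂ := fun t => L₁ t + L₂ t + Real.pi * I - L₃ t
  refine ⟨fun t => exp ((L₁ t + L₂ t) / 2), fun t => (L₁ t - L₂ t) / (2 * I),
    fun t => (L₃ t - L₄ t) / (2 * I), ((hL₁d.add hL₂d).div_const 2).cexp,
    (hL₁d.sub hL₂d).div_const _, (hL₃d.sub (((hL₁d.add hL₂d).add_const _).sub hL₃d)).div_const _,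
    fun t _ => exp_ne_zero _, fun t ht => ?_⟩
  have hL₄ : exp (L₄ t) = φ₃ t - I * φ₄ t := exp_sub_eq_sub_I_mul (hL₃ t ht) (by
    rw [exp_add, exp_add, exp_pi_mul_I, hL₁ t ht, hL₂ t ht, add_I_mul_mul_sub_I_mul, h34 t ht]
    ring)
  have hf : exp ((L₃ t + L₄ t) / 2) = I * exp ((L₁ t + L₂ t) / 2) := by
    rw [show (L₃ t + L₄ t) / 2 = Real.pi / 2 * I + (L₁ t + L₂ t) / 2 by ring, exp_add,
      exp_pi_div_two_mul_I]
  obtain ⟨hφ₁, hφ₂⟩ := eq_exp_mul_cos_and_eq_exp_mul_sin (hL₁ t ht) (hL₂ t ht)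
  obtain ⟨hφ₃, hφ₄⟩ := eq_exp_mul_cos_and_eq_exp_mul_sin (hL₃ t ht) hL₄
  rw [hf] at hφ₃ hφ₄
  exact ⟨hφ₁, hφ₂, hφ₃, hφ₄⟩
end

section
/- Let D ⊆ ℂ be open and h₁, h₂ : D → ℂ be holomorphic. Define a : D → ℂ⁴ by a = (i·cosh h₁, sinh h₁, cosh h₂, i·sinh h₂). Then on D: (i) a·a = 0; (ii) a·a′ = 0; (iii) a′·a′ = (h₁′)² − (h₂′)²; (iv) ‖a‖² = 2·cosh(Re(h₁+h₂))·cosh(Re(h₁−h₂)); (v) ā·a′ = h₁′·sinh(2·Re h₁) + h₂′·sinh(2·Re h₂); (vi) ‖a′‖² = |h₁′|²·cosh(2·Re h₁) + |h₂′|²·cosh(2·Re h₂). -/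
open Complex Finset

/-- Bilinear (complex) dot product on `ℂ⁴`. -/
noncomputable def cdot (a b : Fin 4 → ℂ) : ℂ := ∑ j, a j * b j

/-- Hermitian norm squared on `ℂ⁴`. -/
noncomputable def hnormSq (a : Fin 4 → ℂ) : ℝ := ∑ j, ‖a j‖ ^ 2

lemma aux_two_mul_re (z : ℂ) : ((2:ℂ) * z.re) = z + (starRingEnd ℂ) z := by
  rw [Complex.add_conj]; push_cast; ring

lemma aux_cosh_norm (z : ℂ) :
    (‖Complex.cosh z‖^2 + ‖Complex.sinh z‖^2 : ℝ) = Real.cosh (2*z.re) := by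
  have h : ((‖Complex.cosh z‖^2 + ‖Complex.sinh z‖^2 : ℝ) : ℂ)
      = ((Real.cosh (2*z.re) : ℝ) : ℂ) := by
    rw [Complex.ofReal_cosh]
    push_cast
    rw [← Complex.mul_conj', ← Complex.mul_conj']
    rw [← Complex.cosh_conj, ← Complex.sinh_conj]
    rw [aux_two_mul_re]
    rw [Complex.cosh_add]
  exact_mod_cast h

lemma aux_sinh_conj (z : ℂ) :
    Complex.sinh z * (starRingEnd ℂ) (Complex.cosh z)
      + Complex.cosh z * (starRingEnd ℂ) (Complex.sinh z)
      = ((Real.sinh (2*z.re) : ℝ) : ℂ) := by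
  rw [Complex.ofReal_sinh]
  push_cast
  rw [← Complex.cosh_conj, ← Complex.sinh_conj]
  rw [aux_two_mul_re]
  rw [Complex.sinh_add]

/-- for holomorphic `h₁, h₂ : D → ℂ` on an open set `D ⊆ ℂ` and
`a = (i cosh h₁, sinh h₁, cosh h₂, i sinh h₂)`, on `D`:
(i) `a·a = 0`; (ii) `a·a′ = 0`; (iii) `a′·a′ = h₁′² - h₂′²`;
(iv) `‖a‖² = 2 cosh(Re(h₁+h₂)) cosh(Re(h₁-h₂))`;
(v) `ā·a′ = h₁′ sinh(2 Re h₁) + h₂′ sinh(2 Re h₂)`;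
(vi) `‖a′‖² = |h₁′|² cosh(2 Re h₁) + |h₂′|² cosh(2 Re h₂)`. -/
theorem stmt8 (D : Set ℂ) (hD : IsOpen D) (h₁ h₂ : ℂ → ℂ)
    (hh₁ : DifferentiableOn ℂ h₁ D) (hh₂ : DifferentiableOn ℂ h₂ D)
    (a : ℂ → (Fin 4 → ℂ))
    (ha : ∀ t, a t = ![Complex.I * Complex.cosh (h₁ t), Complex.sinh (h₁ t),
                       Complex.cosh (h₂ t), Complex.I * Complex.sinh (h₂ t)])
    (a' : ℂ → (Fin 4 → ℂ))
    (ha' : ∀ t j, a' t j = deriv (fun z => a z j) t) :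
    ∀ t ∈ D,
      cdot (a t) (a t) = 0 ∧
      cdot (a t) (a' t) = 0 ∧
      cdot (a' t) (a' t) = (deriv h₁ t) ^ 2 - (deriv h₂ t) ^ 2 ∧
      hnormSq (a t) =
        2 * Real.cosh ((h₁ t + h₂ t).re) * Real.cosh ((h₁ t - h₂ t).re) ∧
      cdot (fun j => starRingEnd ℂ (a t j)) (a' t) =
        deriv h₁ t * (Real.sinh (2 * (h₁ t).re) : ℝ) +
        deriv h₂ t * (Real.sinh (2 * (h₂ t).re) : ℝ) ∧
      hnormSq (a' t) =
        ‖deriv h₁ t‖ ^ 2 * Real.cosh (2 * (h₁ t).re) +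
        ‖deriv h₂ t‖ ^ 2 * Real.cosh (2 * (h₂ t).re) := by
  intro t ht
  set c₁ := Complex.cosh (h₁ t) with hc₁
  set s₁ := Complex.sinh (h₁ t) with hs₁
  set c₂ := Complex.cosh (h₂ t) with hc₂
  set s₂ := Complex.sinh (h₂ t) with hs₂
  set d₁ := deriv h₁ t with hd₁
  set d₂ := deriv h₂ t with hd₂
  have hD₁ : HasDerivAt h₁ d₁ t :=
    (hh₁.differentiableAt (hD.mem_nhds ht)).hasDerivAt
  have hD₂ : HasDerivAt h₂ d₂ t :=
    (hh₂.differentiableAt (hD.mem_nhds ht)).hasDerivAt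
  -- function equalities for components
  have e0 : (fun z => a z 0) = fun z => Complex.I * Complex.cosh (h₁ z) := by
    funext z; simp [ha]
  have e1 : (fun z => a z 1) = fun z => Complex.sinh (h₁ z) := by
    funext z; simp [ha]
  have e2 : (fun z => a z 2) = fun z => Complex.cosh (h₂ z) := by
    funext z; simp [ha]
  have e3 : (fun z => a z 3) = fun z => Complex.I * Complex.sinh (h₂ z) := by
    funext z; simp [ha]
  have da0 : a' t 0 = Complex.I * (s₁ * d₁) := by
    rw [ha', e0]
    exact ((hD₁.ccosh).const_mul Complex.I).deriv
  have da1 : a' t 1 = c₁ * d₁ := by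
    rw [ha', e1]; exact (hD₁.csinh).deriv
  have da2 : a' t 2 = s₂ * d₂ := by
    rw [ha', e2]; exact (hD₂.ccosh).deriv
  have da3 : a' t 3 = Complex.I * (c₂ * d₂) := by
    rw [ha', e3]
    exact ((hD₂.csinh).const_mul Complex.I).deriv
  have hid₁ : c₁^2 - s₁^2 = 1 := Complex.cosh_sq_sub_sinh_sq (h₁ t)
  have hid₂ : c₂^2 - s₂^2 = 1 := Complex.cosh_sq_sub_sinh_sq (h₂ t)
  have hat : a t = ![Complex.I * c₁, s₁, c₂, Complex.I * s₂] := ha t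
  refine ⟨?_, ?_, ?_, ?_, ?_, ?_⟩
  · simp only [cdot, Fin.sum_univ_four, hat]
    simp only [Matrix.cons_val_zero, Matrix.cons_val_one, Matrix.head_cons,
      Matrix.cons_val_two, Matrix.tail_cons, Matrix.cons_val_three]
    linear_combination (-1 : ℂ) * hid₁ + hid₂ +
      (Complex.I_sq) * (c₁^2 + s₂^2)
  · simp only [cdot, Fin.sum_univ_four, hat, da0, da1, da2, da3]
    simp only [Matrix.cons_val_zero, Matrix.cons_val_one, Matrix.head_cons,
      Matrix.cons_val_two, Matrix.tail_cons, Matrix.cons_val_three]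
    linear_combination (Complex.I_sq) * (c₁*s₁*d₁ + s₂*c₂*d₂)
  · simp only [cdot, Fin.sum_univ_four, da0, da1, da2, da3]
    linear_combination (d₁^2) * hid₁ - (d₂^2) * hid₂ +
      (Complex.I_sq) * (s₁^2*d₁^2 + c₂^2*d₂^2)
  · simp only [hnormSq, Fin.sum_univ_four, hat]
    simp only [Matrix.cons_val_zero, Matrix.cons_val_one, Matrix.head_cons,
      Matrix.cons_val_two, Matrix.tail_cons, Matrix.cons_val_three]
    simp only [norm_mul, Complex.norm_I, one_mul]
    have k₁ := aux_cosh_norm (h₁ t)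
    have k₂ := aux_cosh_norm (h₂ t)
    rw [hc₁, hs₁, hc₂, hs₂] at *
    have : ‖Complex.cosh (h₁ t)‖^2 + ‖Complex.sinh (h₁ t)‖^2 +
        (‖Complex.cosh (h₂ t)‖^2 + ‖Complex.sinh (h₂ t)‖^2) =
        Real.cosh (2*(h₁ t).re) + Real.cosh (2*(h₂ t).re) := by rw [k₁, k₂]
    have expand : Real.cosh (2*(h₁ t).re) + Real.cosh (2*(h₂ t).re) =
        2 * Real.cosh ((h₁ t + h₂ t).re) * Real.cosh ((h₁ t - h₂ t).re) := by
      rw [Complex.add_re, Complex.sub_re, Real.cosh_add, Real.cosh_sub,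
        Real.cosh_two_mul, Real.cosh_two_mul]
      linear_combination (2*Real.sinh (h₂ t).re^2 + 1) * (Real.sinh_sq (h₁ t).re) +
        (2*Real.cosh (h₁ t).re^2 - 1) * (Real.sinh_sq (h₂ t).re)
    linarith [this, expand]
  · simp only [cdot, Fin.sum_univ_four, hat, da0, da1, da2, da3]
    simp only [Matrix.cons_val_zero, Matrix.cons_val_one, Matrix.head_cons,
      Matrix.cons_val_two, Matrix.tail_cons, Matrix.cons_val_three]
    simp only [map_mul, Complex.conj_I]
    have k₁ := aux_sinh_conj (h₁ t)
    have k₂ := aux_sinh_conj (h₂ t)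
    rw [hc₁, hs₁, hc₂, hs₂]
    linear_combination d₁ * k₁ + d₂ * k₂ -
      ((starRingEnd ℂ (Complex.cosh (h₁ t))) * Complex.sinh (h₁ t) * d₁
        + d₂ * (starRingEnd ℂ (Complex.sinh (h₂ t))) * Complex.cosh (h₂ t)) * Complex.I_sq
  · simp only [hnormSq, Fin.sum_univ_four, da0, da1, da2, da3]
    simp only [norm_mul, Complex.norm_I, one_mul]
    have k₁ := aux_cosh_norm (h₁ t)
    have k₂ := aux_cosh_norm (h₂ t)
    rw [hc₁, hs₁, hc₂, hs₂] at *
    nlinarith [k₁, k₂, sq_nonneg ‖d₁‖, sq_nonneg ‖d₂‖]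
end

section
/- Let D ⊆ ℂ be open, h₁, h₂ : D → ℂ holomorphic, and a = (i·cosh h₁, sinh h₁, cosh h₂, i·sinh h₂) : D → ℂ⁴. Define k₁ = ‖a‖²·‖a′‖² − |ā·a′|² and k₂ = −det(a, ā, a′, ā′) (the determinant of the 4×4 complex matrix with these columns). Then on D: k₁ + k₂ = 2·|h₁′ + h₂′|²·cosh²(Re h₁ − Re h₂) and k₁ − k₂ = 2·|h₁′ − h₂′|²·cosh²(Re h₁ + Re h₂). In particular both k₁ + k₂ and k₁ − k₂ are nonnegative real, and k₂ is real. -/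
/-!
Write `Cᵢ = cosh (2 Re hᵢ)` and `Sᵢ = sinh (2 Re hᵢ)`. Since `|cosh z|² + |sinh z|² = cosh (2 Re z)`
and `conj (cosh z) sinh z + conj (sinh z) cosh z = sinh (2 Re z)`, one gets `‖a‖² = C₁ + C₂`,
`‖a′‖² = |h₁′|² C₁ + |h₂′|² C₂` and `ā · a′ = h₁′ S₁ + h₂′ S₂`. Expanding the determinant along its
two `2 × 2` row blocks gives `k₂ = 2 Re (h₁′ conj h₂′) (1 + C₁ C₂) - (|h₁′|² + |h₂′|²) S₁ S₂`.
Then `Cᵢ² - Sᵢ² = 1` yields `k₁ ± k₂ = |h₁′ ± h₂′|² (1 + C₁ C₂ ∓ S₁ S₂)`, and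
`1 + C₁ C₂ ∓ S₁ S₂ = 2 cosh² (Re h₁ ∓ Re h₂)`.
-/

open Complex Finset

open ComplexConjugate

theorem Matrix.det_fin_four_eq_minors {R : Type*} [CommRing R] (A : Matrix (Fin 4) (Fin 4) R) :
    A.det = (A 0 0 * A 1 1 - A 0 1 * A 1 0) * (A 2 2 * A 3 3 - A 2 3 * A 3 2)
      - (A 0 0 * A 1 2 - A 0 2 * A 1 0) * (A 2 1 * A 3 3 - A 2 3 * A 3 1)
      + (A 0 0 * A 1 3 - A 0 3 * A 1 0) * (A 2 1 * A 3 2 - A 2 2 * A 3 1)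
      + (A 0 1 * A 1 2 - A 0 2 * A 1 1) * (A 2 0 * A 3 3 - A 2 3 * A 3 0)
      - (A 0 1 * A 1 3 - A 0 3 * A 1 1) * (A 2 0 * A 3 2 - A 2 2 * A 3 0)
      + (A 0 2 * A 1 3 - A 0 3 * A 1 2) * (A 2 0 * A 3 1 - A 2 1 * A 3 0) := by
  rw [Matrix.det_succ_row_zero, Fin.sum_univ_four]
  simp only [Matrix.det_fin_three, Matrix.submatrix_apply, Fin.succAbove, Fin.reduceLT,
    Fin.reduceCastSucc, Fin.reduceSucc, Fin.isValue, ↓reduceIte, Fin.coe_ofNat_eq_mod]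
  ring

theorem Complex.cosh_mul_conj_add_sinh_mul_conj (z : ℂ) :
    cosh z * conj (cosh z) + sinh z * conj (sinh z) = Real.cosh (2 * z.re) := by
  rw [← cosh_conj, ← sinh_conj, ← cosh_add, add_conj, ofReal_cosh]

theorem Complex.conj_cosh_mul_sinh_add_conj_sinh_mul_cosh (z : ℂ) :
    conj (cosh z) * sinh z + conj (sinh z) * cosh z = Real.sinh (2 * z.re) := by
  rw [← cosh_conj, ← sinh_conj, ofReal_sinh, ← add_conj, sinh_add]
  ring

theorem Complex.conj_cosh_sq_sub_conj_sinh_sq (z : ℂ) :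
    conj (cosh z) ^ 2 - conj (sinh z) ^ 2 = 1 := by
  rw [← cosh_conj, ← sinh_conj, cosh_sq_sub_sinh_sq]

theorem ofReal_hnormSq (a : Fin 4 → ℂ) : (hnormSq a : ℂ) = ∑ j, a j * conj (a j) := by
  simp only [hnormSq, ofReal_sum, ofReal_pow, mul_conj']

noncomputable def gaussCurvatureNumerator (a a' : Fin 4 → ℂ) : ℝ :=
  hnormSq a * hnormSq a' - ‖cdot (fun j => conj (a j)) a'‖ ^ 2

noncomputable def normalCurvatureNumerator (a a' : Fin 4 → ℂ) : ℂ :=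
  -(Matrix.of fun i j => ![a, fun i => conj (a i), a', fun i => conj (a' i)] j i).det

noncomputable def coshSinhVec (x y : ℂ) : Fin 4 → ℂ := ![I * cosh x, sinh x, cosh y, I * sinh y]

noncomputable def coshSinhVecDeriv (x y p q : ℂ) : Fin 4 → ℂ :=
  ![I * (sinh x * p), cosh x * p, sinh y * q, I * (cosh y * q)]

theorem deriv_coshSinhVec_comp {h₁ h₂ : ℂ → ℂ} {t : ℂ} (hd₁ : DifferentiableAt ℂ h₁ t)
    (hd₂ : DifferentiableAt ℂ h₂ t) (j : Fin 4) :
    deriv (fun z => coshSinhVec (h₁ z) (h₂ z) j) t =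
      coshSinhVecDeriv (h₁ t) (h₂ t) (deriv h₁ t) (deriv h₂ t) j := by
  fin_cases j <;> simp [coshSinhVec, coshSinhVecDeriv, hd₁, hd₂]

theorem curvatureNumerator_add_formula (p q : ℂ) {C₁ S₁ C₂ S₂ : ℝ}
    (h₁ : C₁ ^ 2 - S₁ ^ 2 = 1) (h₂ : C₂ ^ 2 - S₂ ^ 2 = 1) :
    (((C₁ + C₂) * (‖p‖ ^ 2 * C₁ + ‖q‖ ^ 2 * C₂) - ‖p * S₁ + q * S₂‖ ^ 2 : ℝ) : ℂ)
        + ((p * conj q + conj p * q) * (1 + C₁ * C₂) - (p * conj p + q * conj q) * S₁ * S₂)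
      = ((‖p + q‖ ^ 2 * (1 + C₁ * C₂ - S₁ * S₂) : ℝ) : ℂ) := by
  have h₁' : (C₁ : ℂ) ^ 2 - S₁ ^ 2 = 1 := mod_cast h₁
  have h₂' : (C₂ : ℂ) ^ 2 - S₂ ^ 2 = 1 := mod_cast h₂
  push_cast
  simp only [← mul_conj', map_add, map_mul, conj_ofReal]
  linear_combination (p * conj p) * h₁' + q * conj q * h₂'

theorem curvatureNumerator_sub_formula (p q : ℂ) {C₁ S₁ C₂ S₂ : ℝ}
    (h₁ : C₁ ^ 2 - S₁ ^ 2 = 1) (h₂ : C₂ ^ 2 - S₂ ^ 2 = 1) :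
    (((C₁ + C₂) * (‖p‖ ^ 2 * C₁ + ‖q‖ ^ 2 * C₂) - ‖p * S₁ + q * S₂‖ ^ 2 : ℝ) : ℂ)
        - ((p * conj q + conj p * q) * (1 + C₁ * C₂) - (p * conj p + q * conj q) * S₁ * S₂)
      = ((‖p - q‖ ^ 2 * (1 + C₁ * C₂ + S₁ * S₂) : ℝ) : ℂ) := by
  have h₁' : (C₁ : ℂ) ^ 2 - S₁ ^ 2 = 1 := mod_cast h₁
  have h₂' : (C₂ : ℂ) ^ 2 - S₂ ^ 2 = 1 := mod_cast h₂
  push_cast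
  simp only [← mul_conj', map_add, map_sub, map_mul, conj_ofReal]
  linear_combination (p * conj p) * h₁' + q * conj q * h₂'

theorem two_mul_cosh_sub_sq (u v : ℝ) :
    2 * Real.cosh (u - v) ^ 2 = 1 + Real.cosh (2 * u) * Real.cosh (2 * v)
      - Real.sinh (2 * u) * Real.sinh (2 * v) := by
  have h := Real.cosh_sub (2 * u) (2 * v)
  rw [← mul_sub, Real.cosh_two_mul] at h
  linear_combination h + Real.cosh_sq' (u - v)

theorem two_mul_cosh_add_sq (u v : ℝ) :
    2 * Real.cosh (u + v) ^ 2 = 1 + Real.cosh (2 * u) * Real.cosh (2 * v)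
      + Real.sinh (2 * u) * Real.sinh (2 * v) := by
  have h := Real.cosh_add (2 * u) (2 * v)
  rw [← mul_add, Real.cosh_two_mul] at h
  linear_combination h + Real.cosh_sq' (u + v)

section coshSinhVec

variable (x y p q : ℂ)

theorem hnormSq_coshSinhVec :
    hnormSq (coshSinhVec x y) = Real.cosh (2 * x.re) + Real.cosh (2 * y.re) := by
  apply ofReal_injective
  rw [ofReal_hnormSq, ofReal_add, ← cosh_mul_conj_add_sinh_mul_conj,
    ← cosh_mul_conj_add_sinh_mul_conj]
  simp only [Fin.sum_univ_four, coshSinhVec, Matrix.cons_val, map_mul, conj_I]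
  grind [I_sq]

theorem hnormSq_coshSinhVecDeriv :
    hnormSq (coshSinhVecDeriv x y p q) =
      ‖p‖ ^ 2 * Real.cosh (2 * x.re) + ‖q‖ ^ 2 * Real.cosh (2 * y.re) := by
  apply ofReal_injective
  rw [ofReal_hnormSq, ofReal_add, ofReal_mul, ofReal_mul, ofReal_pow, ofReal_pow, ← mul_conj',
    ← mul_conj', ← cosh_mul_conj_add_sinh_mul_conj, ← cosh_mul_conj_add_sinh_mul_conj]
  simp only [Fin.sum_univ_four, coshSinhVecDeriv, Matrix.cons_val, map_mul, conj_I]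
  grind [I_sq]

theorem cdot_conj_coshSinhVec_coshSinhVecDeriv :
    cdot (fun j => conj (coshSinhVec x y j)) (coshSinhVecDeriv x y p q) =
      p * Real.sinh (2 * x.re) + q * Real.sinh (2 * y.re) := by
  rw [← conj_cosh_mul_sinh_add_conj_sinh_mul_cosh, ← conj_cosh_mul_sinh_add_conj_sinh_mul_cosh]
  simp only [cdot, Fin.sum_univ_four, coshSinhVec, coshSinhVecDeriv, Matrix.cons_val, map_mul,
    conj_I]
  grind [I_sq]

theorem normalCurvatureNumerator_coshSinhVec :
    normalCurvatureNumerator (coshSinhVec x y) (coshSinhVecDeriv x y p q) =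
      (p * conj q + conj p * q) * (1 + Real.cosh (2 * x.re) * Real.cosh (2 * y.re))
        - (p * conj p + q * conj q) * Real.sinh (2 * x.re) * Real.sinh (2 * y.re) := by
  rw [← cosh_mul_conj_add_sinh_mul_conj, ← cosh_mul_conj_add_sinh_mul_conj,
    ← conj_cosh_mul_sinh_add_conj_sinh_mul_cosh, ← conj_cosh_mul_sinh_add_conj_sinh_mul_cosh,
    normalCurvatureNumerator, Matrix.det_fin_four_eq_minors]
  simp only [Matrix.of_apply, coshSinhVec, coshSinhVecDeriv, Matrix.cons_val, map_mul, conj_I]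
  ring_nf
  simp only [I_sq]
  -- `cosh² - sinh² = 1` enters only through the minors `[a, a′]` and `[ā, ā′]` of each row block.
  linear_combination (p * conj q) * ((conj (cosh y) ^ 2 - conj (sinh y) ^ 2) * cosh_sq_sub_sinh_sq x
      + conj_cosh_sq_sub_conj_sinh_sq y)
    + (conj p * q) * ((cosh y ^ 2 - sinh y ^ 2) * conj_cosh_sq_sub_conj_sinh_sq x
      + cosh_sq_sub_sinh_sq y)

theorem gaussCurvatureNumerator_add_normalCurvatureNumerator_coshSinhVec :
    (gaussCurvatureNumerator (coshSinhVec x y) (coshSinhVecDeriv x y p q) : ℂ)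
        + normalCurvatureNumerator (coshSinhVec x y) (coshSinhVecDeriv x y p q)
      = ((2 * ‖p + q‖ ^ 2 * Real.cosh (x.re - y.re) ^ 2 : ℝ) : ℂ) := by
  rw [gaussCurvatureNumerator, hnormSq_coshSinhVec, hnormSq_coshSinhVecDeriv,
    cdot_conj_coshSinhVec_coshSinhVecDeriv, normalCurvatureNumerator_coshSinhVec,
    curvatureNumerator_add_formula p q (Real.cosh_sq_sub_sinh_sq _) (Real.cosh_sq_sub_sinh_sq _),
    ← two_mul_cosh_sub_sq]
  ring_nf

theorem gaussCurvatureNumerator_sub_normalCurvatureNumerator_coshSinhVec :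
    (gaussCurvatureNumerator (coshSinhVec x y) (coshSinhVecDeriv x y p q) : ℂ)
        - normalCurvatureNumerator (coshSinhVec x y) (coshSinhVecDeriv x y p q)
      = ((2 * ‖p - q‖ ^ 2 * Real.cosh (x.re + y.re) ^ 2 : ℝ) : ℂ) := by
  rw [gaussCurvatureNumerator, hnormSq_coshSinhVec, hnormSq_coshSinhVecDeriv,
    cdot_conj_coshSinhVec_coshSinhVecDeriv, normalCurvatureNumerator_coshSinhVec,
    curvatureNumerator_sub_formula p q (Real.cosh_sq_sub_sinh_sq _) (Real.cosh_sq_sub_sinh_sq _),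
    ← two_mul_cosh_add_sq]
  ring_nf

end coshSinhVec

/-- STATEMENT 9: for holomorphic `h₁, h₂` on an open `D ⊆ ℂ`,
`a = (i cosh h₁, sinh h₁, cosh h₂, i sinh h₂)`,
`k₁ = ‖a‖²‖a′‖² - |ā·a′|²`, and `k₂ = -det(a, ā, a′, ā′)`, on `D`:
`k₁ + k₂ = 2|h₁′+h₂′|² cosh²(Re h₁ - Re h₂)` and
`k₁ - k₂ = 2|h₁′-h₂′|² cosh²(Re h₁ + Re h₂)`; in particular `k₂` is real. -/
theorem stmt9 (D : Set ℂ) (hD : IsOpen D) (h₁ h₂ : ℂ → ℂ)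
    (hh₁ : DifferentiableOn ℂ h₁ D) (hh₂ : DifferentiableOn ℂ h₂ D)
    (a : ℂ → (Fin 4 → ℂ))
    (ha : ∀ t, a t = ![Complex.I * Complex.cosh (h₁ t), Complex.sinh (h₁ t),
                       Complex.cosh (h₂ t), Complex.I * Complex.sinh (h₂ t)])
    (a' : ℂ → (Fin 4 → ℂ))
    (ha' : ∀ t j, a' t j = deriv (fun z => a z j) t)
    (k₁ : ℂ → ℝ)
    (hk₁ : ∀ t, k₁ t = hnormSq (a t) * hnormSq (a' t) -
      ‖cdot (fun j => starRingEnd ℂ (a t j)) (a' t)‖ ^ 2)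
    (k₂ : ℂ → ℂ)
    (hk₂ : ∀ t, k₂ t = -(Matrix.of (fun (i j : Fin 4) =>
      ![a t, fun i => starRingEnd ℂ (a t i), a' t,
        fun i => starRingEnd ℂ (a' t i)] j i)).det) :
    ∀ t ∈ D,
      (k₁ t : ℂ) + k₂ t =
        ((2 * ‖deriv h₁ t + deriv h₂ t‖ ^ 2 *
          (Real.cosh ((h₁ t).re - (h₂ t).re)) ^ 2 : ℝ) : ℂ) ∧
      (k₁ t : ℂ) - k₂ t =
        ((2 * ‖deriv h₁ t - deriv h₂ t‖ ^ 2 *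
          (Real.cosh ((h₁ t).re + (h₂ t).re)) ^ 2 : ℝ) : ℂ) ∧
      (k₂ t).im = 0 ∧
      0 ≤ k₁ t + (k₂ t).re ∧ 0 ≤ k₁ t - (k₂ t).re := by
  intro t ht
  have ha_eq : a = fun z => coshSinhVec (h₁ z) (h₂ z) := funext ha
  have ha'_eq : a' t = coshSinhVecDeriv (h₁ t) (h₂ t) (deriv h₁ t) (deriv h₂ t) := by
    funext j
    rw [ha', ha_eq, deriv_coshSinhVec_comp (hh₁.differentiableAt (hD.mem_nhds ht))
      (hh₂.differentiableAt (hD.mem_nhds ht))]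
  have hk₁t : k₁ t = gaussCurvatureNumerator (coshSinhVec (h₁ t) (h₂ t))
      (coshSinhVecDeriv (h₁ t) (h₂ t) (deriv h₁ t) (deriv h₂ t)) := by
    rw [hk₁, ← ha'_eq, ha_eq]; rfl
  have hk₂t : k₂ t = normalCurvatureNumerator (coshSinhVec (h₁ t) (h₂ t))
      (coshSinhVecDeriv (h₁ t) (h₂ t) (deriv h₁ t) (deriv h₂ t)) := by
    rw [hk₂, ← ha'_eq, ha_eq]; rfl
  have hadd := gaussCurvatureNumerator_add_normalCurvatureNumerator_coshSinhVec (h₁ t) (h₂ t)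
    (deriv h₁ t) (deriv h₂ t)
  have hsub := gaussCurvatureNumerator_sub_normalCurvatureNumerator_coshSinhVec (h₁ t) (h₂ t)
    (deriv h₁ t) (deriv h₂ t)
  rw [← hk₁t, ← hk₂t] at hadd hsub
  refine ⟨hadd, hsub, ?_, ?_, ?_⟩
  · simpa only [add_im, ofReal_im, zero_add] using congrArg im hadd
  · rw [← ofReal_re (k₁ t), ← add_re, hadd, ofReal_re]
    positivity
  · rw [← ofReal_re (k₁ t), ← sub_re, hsub, ofReal_re]
    positivity
end

section
/- Let D ⊆ ℂ be open, Φ : D → ℂ⁴ and f : D → ℂ holomorphic, and a : D → ℂ⁴ holomorphic with Φ = f·a, a·a = 0, a·a′ = 0 and a ≠ 0 on D. For a vector w ∈ ℂ⁴ at a point t ∈ D, let w⊥ denote its component Hermitian-orthogonal to the span of {a(t), ā(t)}, i.e., w⊥ = w − ((w·ā)/‖a‖²)·a − ((w·a)/‖a‖²)·ā. Then at every point of D: (Φ′)⊥ = f·(a′)⊥ and (Φ′)⊥·(Φ′)⊥ = f²·(a′·a′). -/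
/-!
Differentiating `Φ = f • a` gives `Φ' = f' • a + f • a'`. The projection `w ↦ w⊥` is linear and
kills `a` because `a · a = 0`, so `Φ'⊥ = f • a'⊥`. Since moreover `a' · a = 0`, the vector `a'⊥`
is `a' - λ • a` for some `λ`, and the isotropy of `a` gives `a'⊥ · a'⊥ = a' · a'`.
-/

open Complex Finset

/-- Component of `w` Hermitian-orthogonal to the span of `{a, ā}`:
`w⊥ = w - ((w·ā)/‖a‖²)·a - ((w·a)/‖a‖²)·ā`. -/
noncomputable def perp (a w : Fin 4 → ℂ) : Fin 4 → ℂ :=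
  w - ((cdot w (fun j => starRingEnd ℂ (a j))) / (hnormSq a : ℂ)) • a
    - ((cdot w a) / (hnormSq a : ℂ)) • (fun j => starRingEnd ℂ (a j))

lemma cdot_eq_dotProduct (v w : Fin 4 → ℂ) : cdot v w = v ⬝ᵥ w := rfl

lemma perp_eq (a w : Fin 4 → ℂ) :
    perp a w = w - (w ⬝ᵥ star a / hnormSq a) • a - (w ⬝ᵥ a / hnormSq a) • star a := rfl

lemma dotProduct_star_self_eq_hnormSq (a : Fin 4 → ℂ) : a ⬝ᵥ star a = hnormSq a := by
  simp only [dotProduct, hnormSq, Pi.star_apply, ofReal_sum, ofReal_pow]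
  exact Finset.sum_congr rfl fun j _ => mul_conj' (a j)

open scoped ComplexOrder in
lemma hnormSq_eq_zero_iff {a : Fin 4 → ℂ} : hnormSq a = 0 ↔ a = 0 := by
  rw [← ofReal_eq_zero, ← dotProduct_star_self_eq_hnormSq, dotProduct_comm]
  exact dotProduct_star_self_eq_zero

lemma perp_add (a v w : Fin 4 → ℂ) : perp a (v + w) = perp a v + perp a w := by
  simp only [perp_eq, add_dotProduct, add_div, add_smul]
  abel

lemma perp_smul (a w : Fin 4 → ℂ) (r : ℂ) : perp a (r • w) = r • perp a w := by
  simp only [perp_eq, smul_dotProduct, smul_eq_mul, mul_div_assoc, smul_sub, mul_smul]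

lemma perp_self {a : Fin 4 → ℂ} (haa : cdot a a = 0) : perp a a = 0 := by
  rcases eq_or_ne a 0 with rfl | ha
  · simp [perp_eq]
  · have hN : (hnormSq a : ℂ) ≠ 0 := ofReal_ne_zero.mpr (hnormSq_eq_zero_iff.not.mpr ha)
    rw [perp_eq, dotProduct_star_self_eq_hnormSq, div_self hN, ← cdot_eq_dotProduct, haa]
    simp

lemma cdot_perp_perp {a w : Fin 4 → ℂ} (haa : cdot a a = 0) (haw : cdot a w = 0) :
    cdot (perp a w) (perp a w) = cdot w w := by
  rw [cdot_eq_dotProduct] at haa haw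
  simp [perp_eq, cdot_eq_dotProduct, dotProduct_comm w a, haw, sub_dotProduct, dotProduct_sub,
    haa]

open Filter Topology in
lemma deriv_apply_of_eventuallyEq_mul {ι : Type*} {Φ a : ℂ → ι → ℂ} {f : ℂ → ℂ} {t : ℂ}
    (hfa : ∀ᶠ z in 𝓝 t, Φ z = fun j => f z * a z j) (hf : DifferentiableAt ℂ f t)
    (ha : ∀ j, DifferentiableAt ℂ (fun z => a z j) t) (j : ι) :
    deriv (fun z => Φ z j) t = deriv f t * a t j + f t * deriv (fun z => a z j) t := by
  have hfa_j : (fun z => Φ z j) =ᶠ[𝓝 t] fun z => f z * a z j :=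
    hfa.mono fun z hz => congrFun hz j
  rw [hfa_j.deriv_eq]
  exact deriv_fun_mul hf (ha j)

theorem stmt12_general (D : Set ℂ) (hD : IsOpen D)
    (Φ a : ℂ → (Fin 4 → ℂ)) (f : ℂ → ℂ)
    (hf : DifferentiableOn ℂ f D)
    (ha : DifferentiableOn ℂ a D)
    (hfa : ∀ t ∈ D, Φ t = fun j => f t * a t j)
    (Φ' a' : ℂ → (Fin 4 → ℂ))
    (hΦ' : ∀ t j, Φ' t j = deriv (fun z => Φ z j) t)
    (ha' : ∀ t j, a' t j = deriv (fun z => a z j) t)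
    (haa : ∀ t ∈ D, cdot (a t) (a t) = 0)
    (haa' : ∀ t ∈ D, cdot (a t) (a' t) = 0) :
    ∀ t ∈ D,
      perp (a t) (Φ' t) = (fun j => f t * perp (a t) (a' t) j) ∧
      cdot (perp (a t) (Φ' t)) (perp (a t) (Φ' t)) =
        (f t) ^ 2 * cdot (a' t) (a' t) := by
  intro t ht
  have hnhds := hD.mem_nhds ht
  have hΦ't : Φ' t = deriv f t • a t + f t • a' t := by
    funext j
    rw [hΦ' t j, Pi.add_apply, Pi.smul_apply, Pi.smul_apply, ha' t j]
    exact deriv_apply_of_eventuallyEq_mul (Filter.eventually_of_mem hnhds hfa)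
      (hf.differentiableAt hnhds) (differentiableAt_pi.mp (ha.differentiableAt hnhds)) j
  have hperp : perp (a t) (Φ' t) = f t • perp (a t) (a' t) := by
    rw [hΦ't, perp_add, perp_smul, perp_smul, perp_self (haa t ht), smul_zero, zero_add]
  refine ⟨hperp, ?_⟩
  rw [hperp, cdot_eq_dotProduct, smul_dotProduct, dotProduct_smul, ← cdot_eq_dotProduct,
    cdot_perp_perp (haa t ht) (haa' t ht), smul_eq_mul, smul_eq_mul]
  ring

/-- STATEMENT 12: if `Φ = f·a` with `Φ, f, a` holomorphic on the open set `D ⊆ ℂ`,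
`a·a = 0`, `a·a′ = 0` and `a ≠ 0` on `D`, then at every point of `D`:
`(Φ′)⊥ = f·(a′)⊥` and `(Φ′)⊥·(Φ′)⊥ = f²·(a′·a′)`. -/
theorem stmt12 (D : Set ℂ) (hD : IsOpen D)
    (Φ a : ℂ → (Fin 4 → ℂ)) (f : ℂ → ℂ)
    (hΦ : DifferentiableOn ℂ Φ D) (hf : DifferentiableOn ℂ f D)
    (ha : DifferentiableOn ℂ a D)
    (hfa : ∀ t ∈ D, Φ t = fun j => f t * a t j)
    (Φ' a' : ℂ → (Fin 4 → ℂ))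
    (hΦ' : ∀ t j, Φ' t j = deriv (fun z => Φ z j) t)
    (ha' : ∀ t j, a' t j = deriv (fun z => a z j) t)
    (haa : ∀ t ∈ D, cdot (a t) (a t) = 0)
    (haa' : ∀ t ∈ D, cdot (a t) (a' t) = 0)
    (hane : ∀ t ∈ D, a t ≠ 0) :
    ∀ t ∈ D,
      perp (a t) (Φ' t) = (fun j => f t * perp (a t) (a' t) j) ∧
      cdot (perp (a t) (Φ' t)) (perp (a t) (Φ' t)) =
        (f t) ^ 2 * cdot (a' t) (a' t) :=
  stmt12_general D hD Φ a f hf ha hfa Φ' a' hΦ' ha' haa haa'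
end

section
/- Let D ⊆ ℂ be open and g : D → ℂ holomorphic with g′ nonvanishing on D. Define ν : D → ℝ by ν = 4|g′|²/(|g|² + 1)². Then ν > 0 and ν satisfies the natural equation of minimal surfaces in ℝ³: Δ(ln ν) + 2ν = 0 on D, where Δ is the Laplace operator in the two real coordinates of D ⊆ ℂ ≅ ℝ². -/
/-!
Away from the zeros of `g′`, `log ν = log 4 + 2 log ‖g′‖ - 2 log (‖g‖² + 1)`. The middle term is
harmonic, and for holomorphic `h` and `c > 0` one has `Δ log (‖h‖² + c) = 4c‖h′‖² / (‖h‖² + c)²`,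
so `Δ log ν = -8‖g′‖² / (‖g‖² + 1)² = -2ν`.
-/

open Complex

/-- The Laplace operator `ΔF = F_uu + F_vv` for a function on `ℂ ≅ ℝ²`,
where the two real directions are `1` and `i`. -/
noncomputable def lap (F : ℂ → ℝ) (t : ℂ) : ℝ :=
  fderiv ℝ (fun z => fderiv ℝ F z 1) t 1 +
  fderiv ℝ (fun z => fderiv ℝ F z Complex.I) t Complex.I

open InnerProductSpace Laplacian Filter Topology ComplexConjugate

theorem lap_eq_laplacian {F : ℂ → ℝ} {t : ℂ} (hF : ContDiffAt ℝ 2 F t) : lap F t = Δ F t := by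
  have hd : DifferentiableAt ℝ (fderiv ℝ F) t :=
    (hF.fderiv_right (m := 1) (by norm_num)).differentiableAt (by norm_num)
  simp [lap, laplacian_eq_iteratedFDeriv_complexPlane, iteratedFDeriv_two_apply,
    fderiv_clm_apply hd (differentiableAt_const _)]

theorem hasFDerivAt_norm_sq_add {h : ℂ → ℂ} {h' z : ℂ} (hh : HasDerivAt h h' z) (c : ℝ) :
    HasFDerivAt (fun z => ‖h z‖ ^ 2 + c) (2 • innerSL ℝ (h z * conj h')) z := by
  refine ((hh.hasFDerivAt.restrictScalars ℝ).norm_sq.add_const c).congr_fderiv ?_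
  ext v
  simp [Complex.inner]
  ring

theorem laplacian_log_norm_sq_add {h : ℂ → ℂ} {t : ℂ} (hh : AnalyticAt ℂ h t) {c : ℝ}
    (hc : 0 < c) :
    Δ (fun z => Real.log (‖h z‖ ^ 2 + c)) t
      = 4 * c * ‖deriv h t‖ ^ 2 / (‖h t‖ ^ 2 + c) ^ 2 := by
  have hA : ∀ z, ‖h z‖ ^ 2 + c ≠ 0 := fun z => by positivity
  have hgrad : fderiv ℝ (fun z => Real.log (‖h z‖ ^ 2 + c)) =ᶠ[𝓝 t]
      fun z => (‖h z‖ ^ 2 + c)⁻¹ • 2 • innerSL ℝ (h z * conj (deriv h z)) := by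
    filter_upwards [hh.eventually_analyticAt] with z hz
    exact ((hasFDerivAt_norm_sq_add hz.differentiableAt.hasDerivAt c).log (hA z)).fderiv
  have hw : HasFDerivAt (fun z => h z * conj (deriv h z)) _ t :=
    (hh.differentiableAt.hasDerivAt.hasFDerivAt.restrictScalars ℝ).mul
      (conjCLE.hasFDerivAt.comp t
        (hh.deriv.differentiableAt.hasDerivAt.hasFDerivAt.restrictScalars ℝ))
  have hhess : HasFDerivAt
      (fun z => (‖h z‖ ^ 2 + c)⁻¹ • 2 • innerSL ℝ (h z * conj (deriv h z))) _ t :=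
    ((hasDerivAt_inv (hA t)).comp_hasFDerivAt t
      (hasFDerivAt_norm_sq_add hh.differentiableAt.hasDerivAt c)).smul
    (by exact ((innerSL ℝ).hasFDerivAt.comp t hw).const_smul 2)
  rw [laplacian_eq_iteratedFDeriv_complexPlane]
  simp only [iteratedFDeriv_two_apply, hgrad.fderiv_eq, hhess.fderiv, add_apply, smul_apply,
    ContinuousLinearMap.coe_comp, Function.comp_apply, ContinuousLinearMap.smulRight_apply,
    innerSL_apply_apply]
  -- the `innerSL` applications produced by `∘SL` match the simp lemma only up to instances
  erw [innerSL_apply_apply, innerSL_apply_apply]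
  simp [Complex.inner, Complex.sq_norm, Complex.normSq_apply]
  field_simp
  ring

/-- for `g` holomorphic on the open set `D ⊆ ℂ` with `g′` nonvanishing,
`ν = 4|g′|²/(|g|²+1)²` is positive and satisfies the natural equation of minimal
surfaces in `ℝ³`: `Δ(ln ν) + 2ν = 0` on `D`. -/
theorem stmt14 (D : Set ℂ) (hD : IsOpen D) (g : ℂ → ℂ)
    (hg : DifferentiableOn ℂ g D) (hg' : ∀ t ∈ D, deriv g t ≠ 0)
    (ν : ℂ → ℝ)
    (hν : ∀ t, ν t = 4 * ‖deriv g t‖ ^ 2 / (‖g t‖ ^ 2 + 1) ^ 2) :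
    ∀ t ∈ D, 0 < ν t ∧ lap (fun z => Real.log (ν z)) t + 2 * ν t = 0 := by
  intro t ht
  have hgt : AnalyticAt ℂ g t := hg.analyticAt (hD.mem_nhds ht)
  have hg't : 0 < ‖deriv g t‖ := norm_pos_iff.mpr (hg' t ht)
  refine ⟨by rw [hν]; positivity, ?_⟩
  set H : ℂ → ℝ := (fun _ => Real.log 4) + (2 : ℝ) • fun z => Real.log ‖deriv g z‖
  set L : ℂ → ℝ := fun z => Real.log (‖g z‖ ^ 2 + 1)
  have hH : HarmonicAt H t :=
    (harmonicAt_const _).add ((hgt.deriv.harmonicAt_log_norm (hg' t ht)).const_smul)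
  have hL : ContDiffAt ℝ 2 L t :=
    (((hgt.contDiffAt.restrict_scalars ℝ).norm_sq ℝ).add contDiffAt_const).log (by positivity)
  have h2L : ContDiffAt ℝ 2 ((2 : ℝ) • L) t := hL.const_smul (2 : ℝ)
  have hlog : (fun z => Real.log (ν z)) =ᶠ[𝓝 t] H - (2 : ℝ) • L := by
    filter_upwards [hD.mem_nhds ht] with z hz
    have hg'z : 0 < ‖deriv g z‖ := norm_pos_iff.mpr (hg' z hz)
    simp only [hν, H, L, Pi.add_apply, Pi.sub_apply, Pi.smul_apply, smul_eq_mul]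
    rw [Real.log_div (by positivity) (by positivity), Real.log_mul (by norm_num) (by positivity),
      Real.log_pow, Real.log_pow]
    push_cast
    ring
  rw [lap_eq_laplacian ((hH.1.sub h2L).congr_of_eventuallyEq hlog),
    (laplacian_congr_nhds hlog).eq_of_nhds, hH.1.laplacian_sub h2L, hH.2.eq_of_nhds,
    laplacian_smul _ hL, laplacian_log_norm_sq_add hgt one_pos, hν]
  simp
end

section
/- Let D ⊆ ℂ be open and g₁, g₂ : D → ℂ holomorphic with g₁′ and g₂′ nonvanishing on D. Define K = (−8|g₁′g₂′|/((|g₁|²+1)(|g₂|²+1)))·(|g₁′|²/(|g₁|²+1)² + |g₂′|²/(|g₂|²+1)²) and κ = (8|g₁′g₂′|/((|g₁|²+1)(|g₂|²+1)))·(|g₁′|²/(|g₁|²+1)² − |g₂′|²/(|g₂|²+1)²), and set νⱼ = 4|gⱼ′|²/(|gⱼ|²+1)² for j = 1, 2. Then on D: K = −½·√(ν₁ν₂)·(ν₁ + ν₂) and κ = ½·√(ν₁ν₂)·(ν₁ − ν₂). -/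
open Complex

lemma aux15 (a b p q : ℝ) (ha : 0 < a) (hb : 0 < b) (hp : 0 < p) (hq : 0 < q) :
    (-8 * (a * b) / (p * q)) * (a ^ 2 / p ^ 2 + b ^ 2 / q ^ 2) =
      -(1 / 2) * Real.sqrt ((4 * a ^ 2 / p ^ 2) * (4 * b ^ 2 / q ^ 2)) *
        ((4 * a ^ 2 / p ^ 2) + (4 * b ^ 2 / q ^ 2)) ∧
    (8 * (a * b) / (p * q)) * (a ^ 2 / p ^ 2 - b ^ 2 / q ^ 2) =
      (1 / 2) * Real.sqrt ((4 * a ^ 2 / p ^ 2) * (4 * b ^ 2 / q ^ 2)) *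
        ((4 * a ^ 2 / p ^ 2) - (4 * b ^ 2 / q ^ 2)) := by
  have hs : Real.sqrt ((4 * a ^ 2 / p ^ 2) * (4 * b ^ 2 / q ^ 2)) = 4 * a * b / (p * q) := by
    have h : (4 * a ^ 2 / p ^ 2) * (4 * b ^ 2 / q ^ 2) = (4 * a * b / (p * q)) ^ 2 := by
      field_simp
    rw [h, Real.sqrt_sq (by positivity)]
  rw [hs]
  constructor <;> · field_simp; ring

/-- STATEMENT 15: for holomorphic `g₁, g₂` with nonvanishing derivatives on the open
set `D ⊆ ℂ`, the curvatures `K`, `κ` of the generated minimal surface in `ℝ⁴` factor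
through the curvatures `ν₁, ν₂` of the minimal surfaces in `ℝ³` generated by `g₁, g₂`:
`K = -½√(ν₁ν₂)(ν₁+ν₂)` and `κ = ½√(ν₁ν₂)(ν₁-ν₂)`. -/
theorem stmt15 (D : Set ℂ) (hD : IsOpen D) (g₁ g₂ : ℂ → ℂ)
    (hg₁ : DifferentiableOn ℂ g₁ D) (hg₂ : DifferentiableOn ℂ g₂ D)
    (hg₁' : ∀ t ∈ D, deriv g₁ t ≠ 0) (hg₂' : ∀ t ∈ D, deriv g₂ t ≠ 0)
    (K κ ν₁ ν₂ : ℂ → ℝ)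
    (hK : ∀ t, K t = (-8 * ‖deriv g₁ t * deriv g₂ t‖ /
        ((‖g₁ t‖ ^ 2 + 1) * (‖g₂ t‖ ^ 2 + 1))) *
      (‖deriv g₁ t‖ ^ 2 / (‖g₁ t‖ ^ 2 + 1) ^ 2 +
       ‖deriv g₂ t‖ ^ 2 / (‖g₂ t‖ ^ 2 + 1) ^ 2))
    (hκ : ∀ t, κ t = (8 * ‖deriv g₁ t * deriv g₂ t‖ /
        ((‖g₁ t‖ ^ 2 + 1) * (‖g₂ t‖ ^ 2 + 1))) *
      (‖deriv g₁ t‖ ^ 2 / (‖g₁ t‖ ^ 2 + 1) ^ 2 -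
       ‖deriv g₂ t‖ ^ 2 / (‖g₂ t‖ ^ 2 + 1) ^ 2))
    (hν₁ : ∀ t, ν₁ t = 4 * ‖deriv g₁ t‖ ^ 2 / (‖g₁ t‖ ^ 2 + 1) ^ 2)
    (hν₂ : ∀ t, ν₂ t = 4 * ‖deriv g₂ t‖ ^ 2 / (‖g₂ t‖ ^ 2 + 1) ^ 2) :
    ∀ t ∈ D,
      K t = -(1 / 2) * Real.sqrt (ν₁ t * ν₂ t) * (ν₁ t + ν₂ t) ∧
      κ t = (1 / 2) * Real.sqrt (ν₁ t * ν₂ t) * (ν₁ t - ν₂ t) := by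
  intro t ht
  have ha : (0:ℝ) < ‖deriv g₁ t‖ := norm_pos_iff.mpr (hg₁' t ht)
  have hb : (0:ℝ) < ‖deriv g₂ t‖ := norm_pos_iff.mpr (hg₂' t ht)
  have hp : (0:ℝ) < ‖g₁ t‖ ^ 2 + 1 := by positivity
  have hq : (0:ℝ) < ‖g₂ t‖ ^ 2 + 1 := by positivity
  have h := aux15 ‖deriv g₁ t‖ ‖deriv g₂ t‖ (‖g₁ t‖ ^ 2 + 1) (‖g₂ t‖ ^ 2 + 1) ha hb hp hq
  rw [hK, hκ, hν₁, hν₂, norm_mul]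
  exact h
end

section
/- Let D ⊆ ℂ be open and g₁, g₂ : D → ℂ holomorphic with g₁′ and g₂′ nonvanishing on D. Define K = (−8|g₁′g₂′|/((|g₁|²+1)(|g₂|²+1)))·(|g₁′|²/(|g₁|²+1)² + |g₂′|²/(|g₂|²+1)²) and κ = (8|g₁′g₂′|/((|g₁|²+1)(|g₂|²+1)))·(|g₁′|²/(|g₁|²+1)² − |g₂′|²/(|g₂|²+1)²). Then K < 0, K² − κ² > 0, and the pair (K, κ) satisfies the system of natural PDE's of minimal surfaces of general type in ℝ⁴ on D: (K² − κ²)^{1/4}·Δ ln|κ − K| = 2(2K − κ) and (K² − κ²)^{1/4}·Δ ln|κ + K| = 2(2K + κ), where Δ is the Laplace operator in the two real coordinates of D ⊆ ℂ ≅ ℝ². -/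
/-!
Write `s = ‖g'‖ / (‖g‖² + 1)` for the density of the pull-back of the spherical metric by a
holomorphic `g`. Since `log ‖g'‖` is harmonic and `Δ log (‖g‖² + c) = 4c‖g'‖² / (‖g‖² + c)²`,
one gets `Δ log s = -4 s²` (the spherical metric has constant curvature). In terms of
`s₁, s₂` one has `K = -8 s₁ s₂ (s₁² + s₂²)`, `κ = 8 s₁ s₂ (s₁² - s₂²)`, hence
`κ - K = 16 s₁³ s₂`, `κ + K = -16 s₁ s₂³` and `(K² - κ²)^{1/4} = 4 s₁ s₂`, and both equations
become polynomial identities in `s₁, s₂`.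
-/

open Complex

open Filter Topology

/-- A `HasDerivAt`-style companion of `lap`, recording the derivatives that make `lap F t = a`
computable by the sum and product rules. -/
def HasLapAt (F : ℂ → ℝ) (t : ℂ) (a : ℝ) : Prop :=
  ∃ G : ℂ → ℂ →L[ℝ] ℝ, (∀ᶠ z in 𝓝 t, HasFDerivAt F (G z) z) ∧
    ∃ L₁ L_I : ℂ →L[ℝ] ℝ, HasFDerivAt (fun z => G z 1) L₁ t ∧
      HasFDerivAt (fun z => G z I) L_I t ∧ L₁ 1 + L_I I = a

namespace HasLapAt

variable {F H : ℂ → ℝ} {t : ℂ} {a b : ℝ}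

theorem lap_eq (h : HasLapAt F t a) : lap F t = a := by
  obtain ⟨G, hG, L₁, L_I, h₁, h_I, rfl⟩ := h
  have hfderiv : ∀ v : ℂ, (fun z => fderiv ℝ F z v) =ᶠ[𝓝 t] fun z => G z v := fun v =>
    hG.mono fun z hz => DFunLike.congr_fun hz.fderiv v
  rw [lap, (hfderiv 1).fderiv_eq, (hfderiv I).fderiv_eq, h₁.fderiv, h_I.fderiv]

theorem congr_of_eventuallyEq (h : HasLapAt F t a) (hHF : H =ᶠ[𝓝 t] F) : HasLapAt H t a := by
  obtain ⟨G, hG, rest⟩ := h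
  refine ⟨G, ?_, rest⟩
  filter_upwards [hG, hHF.eventuallyEq_nhds] with z hz hHFz using hz.congr_of_eventuallyEq hHFz

theorem add (hF : HasLapAt F t a) (hH : HasLapAt H t b) :
    HasLapAt (fun z => F z + H z) t (a + b) := by
  obtain ⟨G, hG, L₁, L_I, h₁, h_I, rfl⟩ := hF
  obtain ⟨G', hG', M₁, M_I, k₁, k_I, rfl⟩ := hH
  refine ⟨G + G', ?_, L₁ + M₁, L_I + M_I, h₁.add k₁, h_I.add k_I, ?_⟩
  · filter_upwards [hG, hG'] with z hz hz' using hz.add hz'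
  · simp only [add_apply]; ring

theorem const_mul (r : ℝ) (hF : HasLapAt F t a) : HasLapAt (fun z => r * F z) t (r * a) := by
  obtain ⟨G, hG, L₁, L_I, h₁, h_I, rfl⟩ := hF
  refine ⟨r • G, ?_, r • L₁, r • L_I, h₁.const_mul r, h_I.const_mul r, ?_⟩
  · filter_upwards [hG] with z hz using hz.const_mul r
  · simp only [smul_apply, smul_eq_mul]; ring

theorem sub (hF : HasLapAt F t a) (hH : HasLapAt H t b) :
    HasLapAt (fun z => F z - H z) t (a - b) := by
  simpa [sub_eq_add_neg] using hF.add (hH.const_mul (-1))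

theorem const_add (r : ℝ) (hF : HasLapAt F t a) : HasLapAt (fun z => r + F z) t a := by
  obtain ⟨G, hG, rest⟩ := hF
  exact ⟨G, hG.mono fun z hz => hz.const_add r, rest⟩

end HasLapAt

theorem hasLapAt_log_norm_sq_add {f : ℂ → ℂ} {U : Set ℂ} (hU : IsOpen U)
    (hf : DifferentiableOn ℂ f U) {c : ℝ} (hpos : ∀ z ∈ U, 0 < ‖f z‖ ^ 2 + c) {t : ℂ}
    (ht : t ∈ U) :
    HasLapAt (fun z => Real.log (‖f z‖ ^ 2 + c)) t
      (4 * c * ‖deriv f t‖ ^ 2 / (‖f t‖ ^ 2 + c) ^ 2) := by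
  have hderiv : ∀ z ∈ U, HasDerivAt f (deriv f z) z := fun z hz =>
    (hf.differentiableAt (hU.mem_nhds hz)).hasDerivAt
  have hderiv2 : HasDerivAt (deriv f) (deriv (deriv f) t) t :=
    ((hf.analyticOnNhd hU).deriv t ht).differentiableAt.hasDerivAt
  set N : ℂ → ℝ := fun z => ‖f z‖ ^ 2 + c
  have hN : ∀ z ∈ U, HasFDerivAt N (2 • (innerSL ℝ (f z)).comp
      ((ContinuousLinearMap.toSpanSingleton ℂ (deriv f z)).restrictScalars ℝ)) z :=
    fun z hz => ((hderiv z hz).hasFDerivAt.restrictScalars ℝ).norm_sq.add_const c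
  set G : ℂ → ℂ →L[ℝ] ℝ := fun z => (N z)⁻¹ • 2 • (innerSL ℝ (f z)).comp
    ((ContinuousLinearMap.toSpanSingleton ℂ (deriv f z)).restrictScalars ℝ)
  refine ⟨G, ?_, ?_⟩
  · filter_upwards [hU.mem_nhds ht] with z hz using (hN z hz).log (hpos z hz).ne'
  have hgrad : ∀ v z, G z v = (N z)⁻¹ * (2 * inner ℝ (f z) (v * deriv f z)) := by
    intro v z
    simp only [G, smul_apply, ContinuousLinearMap.comp_apply, innerSL_apply_apply,
      ContinuousLinearMap.coe_restrictScalars', ContinuousLinearMap.toSpanSingleton_apply,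
      smul_eq_mul, nsmul_eq_mul]
    push_cast; ring
  have hpartial := fun v : ℂ =>
    ((hasDerivAt_inv (hpos t ht).ne').comp_hasFDerivAt t (hN t ht)).mul
      ((((hderiv t ht).hasFDerivAt.restrictScalars ℝ).inner ℝ
        ((hderiv2.hasFDerivAt.restrictScalars ℝ).const_mul v)).const_mul 2)
  refine ⟨_, _, (hpartial 1).congr_of_eventuallyEq (.of_forall (hgrad 1)),
    (hpartial I).congr_of_eventuallyEq (.of_forall (hgrad I)), ?_⟩
  have hNt := (hpos t ht).ne'
  -- the terms with `f''` cancel by the Cauchy–Riemann equations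
  simp only [Function.comp_apply, one_mul, one_smul, Complex.inner, mul_re, conj_re, conj_im,
    mul_neg, sub_neg_eq_add, neg_smul, smul_neg, add_apply, smul_apply,
    ContinuousLinearMap.comp_apply, ContinuousLinearMap.prod_apply,
    ContinuousLinearMap.coe_restrictScalars', ContinuousLinearMap.toSpanSingleton_apply,
    smul_eq_mul, fderivInnerCLM_apply, inner_self_eq_norm_sq_to_K, Real.ringHom_apply, neg_apply,
    coe_innerSL_apply, smul_add, nsmul_eq_mul, Nat.cast_ofNat, I_re, zero_mul, I_im, zero_sub,
    neg_mul, mul_im, zero_add, neg_zero, neg_neg, Complex.norm_mul, norm_I, N]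
  simp only [Complex.sq_norm, Complex.normSq_apply] at hNt ⊢
  field_simp
  ring

theorem hasLapAt_log_norm {f : ℂ → ℂ} {U : Set ℂ} (hU : IsOpen U) (hf : DifferentiableOn ℂ f U)
    (hf₀ : ∀ z ∈ U, f z ≠ 0) {t : ℂ} (ht : t ∈ U) :
    HasLapAt (fun z => Real.log ‖f z‖) t 0 := by
  convert (hasLapAt_log_norm_sq_add hU hf (c := 0)
    (fun z hz => by simpa using pow_pos (norm_pos_iff.2 (hf₀ z hz)) 2) ht).const_mul (1 / 2) using 1
  · funext z
    rw [add_zero, Real.log_pow]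
    push_cast; ring
  · ring

noncomputable def sphericalDeriv (f : ℂ → ℂ) (z : ℂ) : ℝ :=
  ‖deriv f z‖ / (‖f z‖ ^ 2 + 1)

theorem sphericalDeriv_pos {f : ℂ → ℂ} {z : ℂ} (h : deriv f z ≠ 0) : 0 < sphericalDeriv f z :=
  div_pos (norm_pos_iff.2 h) (by positivity)

theorem hasLapAt_log_sphericalDeriv {f : ℂ → ℂ} {U : Set ℂ} (hU : IsOpen U)
    (hf : DifferentiableOn ℂ f U) (hf' : ∀ z ∈ U, deriv f z ≠ 0) {t : ℂ} (ht : t ∈ U) :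
    HasLapAt (fun z => Real.log (sphericalDeriv f z)) t (-4 * sphericalDeriv f t ^ 2) := by
  have hlog_norm := hasLapAt_log_norm hU (hf.analyticOnNhd hU).deriv.differentiableOn hf' ht
  have hlog_sq := hasLapAt_log_norm_sq_add hU hf (c := 1) (fun z _ => by positivity) ht
  have heq : (fun z => Real.log (sphericalDeriv f z)) =ᶠ[𝓝 t]
      fun z => Real.log ‖deriv f z‖ - Real.log (‖f z‖ ^ 2 + 1) := by
    filter_upwards [hU.mem_nhds ht] with z hz
    exact Real.log_div (norm_ne_zero_iff.2 (hf' z hz)) (by positivity)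
  convert (hlog_norm.sub hlog_sq).congr_of_eventuallyEq heq using 1
  simp only [sphericalDeriv, div_pow]
  ring

theorem hasLapAt_log_mul_pow_sphericalDeriv {f g : ℂ → ℂ} {U : Set ℂ} (hU : IsOpen U)
    (hf : DifferentiableOn ℂ f U) (hg : DifferentiableOn ℂ g U)
    (hf' : ∀ z ∈ U, deriv f z ≠ 0) (hg' : ∀ z ∈ U, deriv g z ≠ 0)
    {c : ℝ} (hc : c ≠ 0) (m n : ℕ) {t : ℂ} (ht : t ∈ U) :
    HasLapAt (fun z => Real.log (c * sphericalDeriv f z ^ m * sphericalDeriv g z ^ n)) t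
      (-4 * (m * sphericalDeriv f t ^ 2 + n * sphericalDeriv g t ^ 2)) := by
  have heq : (fun z => Real.log (c * sphericalDeriv f z ^ m * sphericalDeriv g z ^ n)) =ᶠ[𝓝 t]
      fun z => Real.log c +
        (m * Real.log (sphericalDeriv f z) + n * Real.log (sphericalDeriv g z)) := by
    filter_upwards [hU.mem_nhds ht] with z hz
    have hfz := pow_ne_zero m (sphericalDeriv_pos (hf' z hz)).ne'
    have hgz := pow_ne_zero n (sphericalDeriv_pos (hg' z hz)).ne'
    rw [Real.log_mul (mul_ne_zero hc hfz) hgz, Real.log_mul hc hfz, Real.log_pow, Real.log_pow,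
      add_assoc]
  convert ((((hasLapAt_log_sphericalDeriv hU hf hf' ht).const_mul m).add
    ((hasLapAt_log_sphericalDeriv hU hg hg' ht).const_mul n)).const_add
      (Real.log c)).congr_of_eventuallyEq heq using 1
  ring

/-- STATEMENT 18: for holomorphic `g₁, g₂` with nonvanishing derivatives on the open
set `D ⊆ ℂ`, the functions `K, κ` given by the canonical Weierstrass representation
satisfy `K < 0`, `K² - κ² > 0`, and the system of natural PDE's of minimal surfaces
of general type in `ℝ⁴`:
`(K² - κ²)^{1/4} Δ ln|κ - K| = 2(2K - κ)` and `(K² - κ²)^{1/4} Δ ln|κ + K| = 2(2K + κ)`. -/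
theorem stmt18 (D : Set ℂ) (hD : IsOpen D) (g₁ g₂ : ℂ → ℂ)
    (hg₁ : DifferentiableOn ℂ g₁ D) (hg₂ : DifferentiableOn ℂ g₂ D)
    (hg₁' : ∀ t ∈ D, deriv g₁ t ≠ 0) (hg₂' : ∀ t ∈ D, deriv g₂ t ≠ 0)
    (K κ : ℂ → ℝ)
    (hK : ∀ t, K t = (-8 * ‖deriv g₁ t * deriv g₂ t‖ /
        ((‖g₁ t‖ ^ 2 + 1) * (‖g₂ t‖ ^ 2 + 1))) *
      (‖deriv g₁ t‖ ^ 2 / (‖g₁ t‖ ^ 2 + 1) ^ 2 +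
       ‖deriv g₂ t‖ ^ 2 / (‖g₂ t‖ ^ 2 + 1) ^ 2))
    (hκ : ∀ t, κ t = (8 * ‖deriv g₁ t * deriv g₂ t‖ /
        ((‖g₁ t‖ ^ 2 + 1) * (‖g₂ t‖ ^ 2 + 1))) *
      (‖deriv g₁ t‖ ^ 2 / (‖g₁ t‖ ^ 2 + 1) ^ 2 -
       ‖deriv g₂ t‖ ^ 2 / (‖g₂ t‖ ^ 2 + 1) ^ 2)) :
    ∀ t ∈ D,
      K t < 0 ∧ 0 < K t ^ 2 - κ t ^ 2 ∧
      (K t ^ 2 - κ t ^ 2) ^ ((1 : ℝ) / 4) *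
        lap (fun z => Real.log |κ z - K z|) t = 2 * (2 * K t - κ t) ∧
      (K t ^ 2 - κ t ^ 2) ^ ((1 : ℝ) / 4) *
        lap (fun z => Real.log |κ z + K z|) t = 2 * (2 * K t + κ t) := by
  intro t ht
  set s₁ := sphericalDeriv g₁
  set s₂ := sphericalDeriv g₂
  have hKs : ∀ z, K z = -8 * s₁ z * s₂ z * (s₁ z ^ 2 + s₂ z ^ 2) := fun z => by
    rw [hK, norm_mul]; simp only [s₁, s₂, sphericalDeriv]; field_simp
  have hκs : ∀ z, κ z = 8 * s₁ z * s₂ z * (s₁ z ^ 2 - s₂ z ^ 2) := fun z => by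
    rw [hκ, norm_mul]; simp only [s₁, s₂, sphericalDeriv]; field_simp
  have hminus : (fun z => Real.log |κ z - K z|) = fun z => Real.log (16 * s₁ z ^ 3 * s₂ z ^ 1) := by
    funext z
    rw [Real.log_abs, hKs, hκs]
    congr 1; ring
  have hplus : (fun z => Real.log |κ z + K z|) = fun z => Real.log (16 * s₁ z ^ 1 * s₂ z ^ 3) := by
    funext z
    rw [Real.log_abs, ← Real.log_neg_eq_log, hKs, hκs]
    congr 1; ring
  have hs₁ : 0 < s₁ t := sphericalDeriv_pos (hg₁' t ht)
  have hs₂ : 0 < s₂ t := sphericalDeriv_pos (hg₂' t ht)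
  have hdiff : K t ^ 2 - κ t ^ 2 = (4 * s₁ t * s₂ t) ^ 4 := by rw [hKs, hκs]; ring
  have hroot : (K t ^ 2 - κ t ^ 2) ^ ((1 : ℝ) / 4) = 4 * s₁ t * s₂ t := by
    rw [hdiff, one_div, ← Real.rpow_natCast, ← Real.rpow_mul (by positivity)]
    norm_num
  have hKneg : K t < 0 := by
    rw [hKs]
    linarith [mul_pos (mul_pos hs₁ hs₂) (add_pos (pow_pos hs₁ 2) (pow_pos hs₂ 2))]
  have hlap := fun m n => (hasLapAt_log_mul_pow_sphericalDeriv hD hg₁ hg₂ hg₁' hg₂'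
    (c := 16) (by norm_num) m n ht).lap_eq
  refine ⟨hKneg, by rw [hdiff]; positivity, ?_, ?_⟩
  · rw [hroot, hminus, hlap, hKs, hκs]
    push_cast; ring
  · rw [hroot, hplus, hlap, hKs, hκs]
    push_cast; ring
end
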